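/- arXiv:2407.03774 — 2 statements merged into one kernel-verified Lean document; each statement's English description precedes it below -/
import Mathlib

section
/- In the bivariate Burr distribution with joint c.d.f. F(x,y) = 1 - (1 + (x/λ)^γ)^{-ψ} - (1 + (y/λ)^γ)^{-ψ} + (1 + (x/λ)^γ + (y/λ)^γ)^{-ψ} (γ, λ, ψ > 0), the conditional c.d.f. of Y given X = x is F(y|x) = 1 - (1 + (y/λ̃(x))^γ)^{-(ψ+1)}, where λ̃(x) = (λ^γ + x^γ)^{1/γ}. That is, the conditional distribution of Y given X = x is Burr with parameters (γ, λ̃(x), ψ+1). -/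
/-!
With `a = (x/λ)^γ` and `b = (y/λ)^γ`, the Burr survival function `(1 + a)^(-ψ)` is linearised by
the HRT generator: `(1 - F x)^(-1/ψ) = 1 + a`. Differentiating the copula in `u` gives
`1 - (1 - u)^(-1/ψ - 1) S^(-ψ-1)` with `S = 1 + a + b`, which at `u = F x` is
`1 - ((1 + a + b)/(1 + a))^(-(ψ+1)) = 1 - (1 + b/(1 + a))^(-(ψ+1))`,
and `b/(1 + a) = y^γ/(λ^γ + x^γ) = (y/λ̃(x))^γ`.
-/

open Real

/-- The Hougaard–Revankar–Tsui copula with parameter `ψ`. -/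
noncomputable def hrtCopula (ψ u v : ℝ) : ℝ :=
  u + v - 1 + ((1 - u) ^ (-1 / ψ) + (1 - v) ^ (-1 / ψ) - 1) ^ (-ψ)

theorem hasDerivAt_hrtCopula_fst {ψ u v : ℝ} (hψ : ψ ≠ 0) (hu : u < 1)
    (hS : (1 - u) ^ (-1 / ψ) + (1 - v) ^ (-1 / ψ) - 1 ≠ 0) :
    HasDerivAt (fun u => hrtCopula ψ u v)
      (1 - (1 - u) ^ (-1 / ψ - 1) * ((1 - u) ^ (-1 / ψ) + (1 - v) ^ (-1 / ψ) - 1) ^ (-ψ - 1))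
      u := by
  have hsub : HasDerivAt (fun u : ℝ => 1 - u) (-1) u := by
    simpa using (hasDerivAt_id u).const_sub 1
  have hS' := (((hsub.rpow_const (p := -1 / ψ) (Or.inl (sub_ne_zero.2 hu.ne'))).add_const
    ((1 - v) ^ (-1 / ψ))).sub_const 1).rpow_const (p := -ψ) (Or.inl hS)
  refine ((((hasDerivAt_id u).add_const v).sub_const 1).add hS').congr_deriv ?_
  field_simp
  ring

theorem rpow_neg_rpow_neg_div {t : ℝ} (ht : 0 ≤ t) {ψ : ℝ} (hψ : ψ ≠ 0) (q : ℝ) :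
    (t ^ (-ψ)) ^ (-q / ψ) = t ^ q := by
  rw [← rpow_mul ht]
  congr 1
  field_simp

theorem rpow_mul_rpow_neg_eq_div_rpow_neg {s t : ℝ} (hs : 0 < s) (ht : 0 < t) (p : ℝ) :
    s ^ p * t ^ (-p) = (t / s) ^ (-p) := by
  rw [div_rpow ht.le hs.le, rpow_neg hs.le, rpow_neg ht.le]
  have : 0 < s ^ p := rpow_pos_of_pos hs p
  have : 0 < t ^ p := rpow_pos_of_pos ht p
  field_simp

theorem div_rpow_div_one_add_div_rpow {γ lam x y : ℝ} (hγ : γ ≠ 0) (hlam : 0 < lam)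
    (hx : 0 ≤ x) (hy : 0 ≤ y) :
    (y / lam) ^ γ / (1 + (x / lam) ^ γ) = (y / (lam ^ γ + x ^ γ) ^ (1 / γ)) ^ γ := by
  have hlamγ : 0 < lam ^ γ := rpow_pos_of_pos hlam γ
  have hs : 0 ≤ lam ^ γ + x ^ γ := by positivity
  rw [div_rpow hy hlam.le, div_rpow hx hlam.le, div_rpow hy (rpow_nonneg hs _), one_div,
    rpow_inv_rpow hs hγ]
  field_simp

/-- Conditional c.d.f. in the bivariate Burr distribution: with Burr marginals
`F(x) = 1 - (1+(x/λ)^γ)^(-ψ)` coupled by the HRT copula with parameter `ψ`,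
the conditional c.d.f. of `Y` given `X = x`, namely
`∂C(u, F(y))/∂u` at `u = F(x)`, equals `1 - (1 + (y/λ̃(x))^γ)^(-(ψ+1))`
with `λ̃(x) = (λ^γ + x^γ)^(1/γ)`; i.e. `Y | X = x` is Burr `(γ, λ̃(x), ψ+1)`. -/
theorem bivariate_burr_conditional_cdf
    (γ lam ψ : ℝ) (hγ : 0 < γ) (hlam : 0 < lam) (hψ : 0 < ψ)
    (F : ℝ → ℝ) (hF : ∀ x, F x = 1 - (1 + (x / lam) ^ γ) ^ (-ψ))
    (C : ℝ → ℝ → ℝ)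
    (hC : ∀ u v, C u v
        = u + v - 1 + ((1 - u) ^ (-1 / ψ) + (1 - v) ^ (-1 / ψ) - 1) ^ (-ψ)) :
    ∀ x > 0, ∀ y > 0,
      HasDerivAt (fun u => C u (F y))
        (1 - (1 + (y / (lam ^ γ + x ^ γ) ^ (1 / γ)) ^ γ) ^ (-(ψ + 1)))
        (F x) := by
  intro x hx y hy
  set a := (x / lam) ^ γ
  set b := (y / lam) ^ γ
  have ha : 0 < 1 + a := by positivity
  have hb : 0 < 1 + b := by positivity
  have hFx : 1 - F x = (1 + a) ^ (-ψ) := by rw [hF]; ring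
  have hFy : 1 - F y = (1 + b) ^ (-ψ) := by rw [hF]; ring
  have hAx : (1 - F x) ^ (-1 / ψ) = 1 + a := by
    rw [hFx, rpow_neg_rpow_neg_div ha.le hψ.ne', rpow_one]
  have hAy : (1 - F y) ^ (-1 / ψ) = 1 + b := by
    rw [hFy, rpow_neg_rpow_neg_div hb.le hψ.ne', rpow_one]
  have hBx : (1 - F x) ^ (-1 / ψ - 1) = (1 + a) ^ (ψ + 1) := by
    rw [show -1 / ψ - 1 = -(ψ + 1) / ψ by field_simp; ring, hFx,
      rpow_neg_rpow_neg_div ha.le hψ.ne']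
  have hS : (1 - F x) ^ (-1 / ψ) + (1 - F y) ^ (-1 / ψ) - 1 = 1 + a + b := by
    rw [hAx, hAy]; ring
  have hu : F x < 1 := by linarith [rpow_pos_of_pos ha (-ψ)]
  have hderiv := hasDerivAt_hrtCopula_fst (v := F y) hψ.ne' hu (by rw [hS]; positivity)
  rw [hS, hBx, show -ψ - 1 = -(ψ + 1) by ring, rpow_mul_rpow_neg_eq_div_rpow_neg ha
    (by positivity), show (1 + a + b) / (1 + a) = 1 + b / (1 + a) by field_simp,
    div_rpow_div_one_add_div_rpow hγ.ne' hlam hx.le hy.le] at hderiv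
  simpa only [hrtCopula, ← hC] using hderiv
end

section
/- Let F₁(x) = 1 - (1 + (x/λ₁)^{γ₁})^{-κ₁} and F₂(x) = 1 - (1 + (x/λ₂)^{γ₂})^{-κ₂} be two three-parameter Burr c.d.f.s, and define φ_i(t) = λ_i^t κ_i B(κ_i - t/γ_i, 1 + t/γ_i) (the t-th moment transform) for t < κ_i γ_i. If κ₁ γ₁ < κ₂ γ₂, then lim_{t → (κ₁γ₁)⁻} φ₂(t)/φ₁(t) = 0. -/
/-!
The moment transform `φ(t) = λ^t κ B(κ - t/γ, 1 + t/γ)` is finite and continuous on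
`-γ < t < κγ`, and blows up as `t → (κγ)⁻` because `Γ` has a pole at `0`. Hence if
`κ₁γ₁ < κ₂γ₂`, at `t = κ₁γ₁` the numerator `φ₂` has a finite limit while the denominator
`φ₁` tends to `+∞`.
-/

open Filter Real Set Topology

namespace Real

theorem continuousAt_Gamma_of_pos {s : ℝ} (hs : 0 < s) : ContinuousAt Gamma s :=
  (differentiableAt_Gamma fun m h => by
    linarith [h ▸ hs, (m.cast_nonneg : (0 : ℝ) ≤ m)]).continuousAt

theorem tendsto_Gamma_nhdsGT_zero_atTop : Tendsto Gamma (𝓝[>] 0) atTop := by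
  have hΓ₁ : Tendsto (fun s => Gamma (s + 1)) (𝓝[>] (0 : ℝ)) (𝓝 1) := by
    have := (continuousAt_Gamma_of_pos one_pos).tendsto.comp
      ((continuous_add_const (1 : ℝ)).tendsto' 0 1 (zero_add 1))
    rw [Gamma_one] at this
    exact this.mono_left nhdsWithin_le_nhds
  refine (hΓ₁.pos_mul_atTop one_pos tendsto_inv_nhdsGT_zero).congr' ?_
  filter_upwards [self_mem_nhdsWithin] with s (hs : 0 < s)
  rw [Gamma_add_one hs.ne']
  field_simp

noncomputable def beta (a b : ℝ) : ℝ := Gamma a * Gamma b / Gamma (a + b)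

end Real

open Real

theorem Filter.Tendsto.beta {α : Type*} {l : Filter α} {f g : α → ℝ} {a b : ℝ}
    (hf : Tendsto f l (𝓝 a)) (hg : Tendsto g l (𝓝 b)) (ha : 0 < a) (hb : 0 < b) :
    Tendsto (fun x => Real.beta (f x) (g x)) l (𝓝 (Real.beta a b)) :=
  (((continuousAt_Gamma_of_pos ha).tendsto.comp hf).mul
    ((continuousAt_Gamma_of_pos hb).tendsto.comp hg)).div
    ((continuousAt_Gamma_of_pos (add_pos ha hb)).tendsto.comp (hf.add hg))
    (Gamma_pos_of_pos (add_pos ha hb)).ne'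

theorem Filter.Tendsto.beta_atTop {α : Type*} {l : Filter α} {f g : α → ℝ} {b : ℝ}
    (hf : Tendsto f l (𝓝[>] 0)) (hg : Tendsto g l (𝓝 b)) (hb : 0 < b) :
    Tendsto (fun x => Real.beta (f x) (g x)) l atTop := by
  have hf₀ : Tendsto f l (𝓝 0) := hf.mono_right nhdsWithin_le_nhds
  have hratio : Tendsto (fun x => Gamma (g x) / Gamma (f x + g x)) l (𝓝 1) := by
    have hΓb := (continuousAt_Gamma_of_pos hb).tendsto
    have := (hΓb.comp hg).div (hΓb.comp (by simpa using hf₀.add hg)) (Gamma_pos_of_pos hb).ne'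
    rwa [div_self (Gamma_pos_of_pos hb).ne'] at this
  refine ((tendsto_Gamma_nhdsGT_zero_atTop.comp hf).atTop_mul_pos one_pos hratio).congr
    fun x => ?_
  simp only [Function.comp, Real.beta, mul_div_assoc]

noncomputable def burrMomentTransform (lam κ γ t : ℝ) : ℝ :=
  lam ^ t * κ * Real.beta (κ - t / γ) (1 + t / γ)

section burrMomentTransform

variable {lam κ γ : ℝ}

theorem continuousAt_burrMomentTransform {t : ℝ} (hlam : lam ≠ 0) (hγ : 0 < γ)
    (ht : t < κ * γ) (ht' : -γ < t) : ContinuousAt (burrMomentTransform lam κ γ) t := by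
  have hdiv : Tendsto (fun s => s / γ) (𝓝 t) (𝓝 (t / γ)) := tendsto_id.div_const γ
  have hleft : 0 < κ - t / γ := sub_pos.2 ((div_lt_iff₀ hγ).2 ht)
  have hright : 0 < 1 + t / γ := by
    rw [← neg_lt_iff_pos_add', lt_div_iff₀ hγ]; linarith
  exact ((continuousAt_const_rpow hlam).tendsto.mul tendsto_const_nhds).mul
    ((tendsto_const_nhds.sub hdiv).beta (tendsto_const_nhds.add hdiv) hleft hright)

theorem tendsto_burrMomentTransform_atTop (hlam : 0 < lam) (hκ : 0 < κ) (hγ : 0 < γ) :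
    Tendsto (burrMomentTransform lam κ γ) (𝓝[<] (κ * γ)) atTop := by
  have hdiv : Tendsto (fun t => t / γ) (𝓝[<] (κ * γ)) (𝓝 κ) := by
    simpa [hγ.ne'] using (tendsto_id.div_const γ).mono_left (nhdsWithin_le_nhds (a := κ * γ))
  have hleft : Tendsto (fun t => κ - t / γ) (𝓝[<] (κ * γ)) (𝓝[>] 0) := by
    refine tendsto_nhdsWithin_iff.2 ⟨by simpa using (tendsto_const_nhds (x := κ)).sub hdiv, ?_⟩
    filter_upwards [self_mem_nhdsWithin] with t (ht : t < κ * γ)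
    exact sub_pos.2 ((div_lt_iff₀ hγ).2 ht)
  have hcoeff : Tendsto (fun t => lam ^ t * κ) (𝓝[<] (κ * γ)) (𝓝 (lam ^ (κ * γ) * κ)) :=
    (((continuousAt_const_rpow hlam.ne').tendsto).mono_left nhdsWithin_le_nhds).mul_const κ
  exact hcoeff.pos_mul_atTop (by positivity)
    (hleft.beta_atTop (tendsto_const_nhds.add hdiv) (by linarith))

end burrMomentTransform

theorem burr_moment_transform_ratio_limit_general
    (γ₁ γ₂ lam₁ lam₂ κ₁ κ₂ : ℝ)
    (hγ₁ : 0 < γ₁) (hγ₂ : 0 < γ₂) (hlam₁ : 0 < lam₁) (hlam₂ : 0 < lam₂)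
    (hκ₁ : 0 < κ₁)
    (hlt : κ₁ * γ₁ < κ₂ * γ₂)
    (φ₁ φ₂ : ℝ → ℝ)
    (hφ₁ : ∀ t, φ₁ t = lam₁ ^ t * κ₁ *
        (Real.Gamma (κ₁ - t / γ₁) * Real.Gamma (1 + t / γ₁) /
          Real.Gamma ((κ₁ - t / γ₁) + (1 + t / γ₁))))
    (hφ₂ : ∀ t, φ₂ t = lam₂ ^ t * κ₂ *
        (Real.Gamma (κ₂ - t / γ₂) * Real.Gamma (1 + t / γ₂) /
          Real.Gamma ((κ₂ - t / γ₂) + (1 + t / γ₂)))) :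
    Tendsto (fun t => φ₂ t / φ₁ t)
      (nhdsWithin (κ₁ * γ₁) (Iio (κ₁ * γ₁))) (nhds 0) := by
  obtain rfl : φ₁ = burrMomentTransform lam₁ κ₁ γ₁ := funext hφ₁
  obtain rfl : φ₂ = burrMomentTransform lam₂ κ₂ γ₂ := funext hφ₂
  have hφ₂_cont : ContinuousAt (burrMomentTransform lam₂ κ₂ γ₂) (κ₁ * γ₁) :=
    continuousAt_burrMomentTransform hlam₂.ne' hγ₂ hlt (by nlinarith [mul_pos hκ₁ hγ₁])
  exact (hφ₂_cont.tendsto.mono_left nhdsWithin_le_nhds).div_atTop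
    (tendsto_burrMomentTransform_atTop hlam₁ hκ₁ hγ₁)

/-- Key ratio limit for identifiability of Burr mixtures: with moment
transforms `φ_i(t) = λ_i^t κ_i B(κ_i - t/γ_i, 1 + t/γ_i)` (where
`B(a,b) = Γ(a)Γ(b)/Γ(a+b)`), if `κ₁γ₁ < κ₂γ₂` then
`φ₂(t)/φ₁(t) → 0` as `t → (κ₁γ₁)⁻`. -/
theorem burr_moment_transform_ratio_limit
    (γ₁ γ₂ lam₁ lam₂ κ₁ κ₂ : ℝ)
    (hγ₁ : 0 < γ₁) (hγ₂ : 0 < γ₂) (hlam₁ : 0 < lam₁) (hlam₂ : 0 < lam₂)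
    (hκ₁ : 0 < κ₁) (hκ₂ : 0 < κ₂)
    (hlt : κ₁ * γ₁ < κ₂ * γ₂)
    (φ₁ φ₂ : ℝ → ℝ)
    (hφ₁ : ∀ t, φ₁ t = lam₁ ^ t * κ₁ *
        (Real.Gamma (κ₁ - t / γ₁) * Real.Gamma (1 + t / γ₁) /
          Real.Gamma ((κ₁ - t / γ₁) + (1 + t / γ₁))))
    (hφ₂ : ∀ t, φ₂ t = lam₂ ^ t * κ₂ *
        (Real.Gamma (κ₂ - t / γ₂) * Real.Gamma (1 + t / γ₂) /
          Real.Gamma ((κ₂ - t / γ₂) + (1 + t / γ₂)))) :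
    Tendsto (fun t => φ₂ t / φ₁ t)
      (nhdsWithin (κ₁ * γ₁) (Iio (κ₁ * γ₁))) (nhds 0) :=
  burr_moment_transform_ratio_limit_general γ₁ γ₂ lam₁ lam₂ κ₁ κ₂ hγ₁ hγ₂ hlam₁ hlam₂ hκ₁ hlt φ₁ φ₂
    hφ₁ hφ₂
end
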